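/- arXiv:2312.06659 — 2 statements merged into one kernel-verified Lean document; each statement's English description precedes it below -/
import Mathlib

section
/- For every Q, Q' : 𝒳×𝒜 → ℝ and every μ ∈ Δ(𝒳), ‖P₂(Q,μ) − P₂(Q',μ)‖₁ ≤ φ|𝒜|·‖Q − Q'‖∞. -/
open Finset Filter
open scoped Classical

noncomputable section

variable {X A : Type*}

/-- A probability vector on a finite set. -/
def IsProb [Fintype X] (μ : X → ℝ) : Prop := (∀ x, 0 ≤ μ x) ∧ ∑ x, μ x = 1

/-- ℓ¹ norm of a signed measure / vector on a finite set. -/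
def l1 [Fintype X] (μ : X → ℝ) : ℝ := ∑ x, |μ x|

/-- Sup norm of a Q-table. -/
def supQ [Fintype X] [Fintype A] [Nonempty X] [Nonempty A] (Q : X → A → ℝ) : ℝ :=
  Finset.univ.sup' Finset.univ_nonempty (fun xa : X × A => |Q xa.1 xa.2|)

/-- Minimum of a row of a Q-table (minimum over actions). -/
def minRow [Fintype A] [Nonempty A] (q : A → ℝ) : ℝ :=
  Finset.univ.inf' Finset.univ_nonempty q

/-- The soft-min distribution over actions with parameter φ. -/
def softmin [Fintype A] (φ : ℝ) (z : A → ℝ) (a : A) : ℝ :=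
  Real.exp (-φ * z a) / ∑ a', Real.exp (-φ * z a')

/-- The argmin_e policy: uniform over the minimizers, zero elsewhere. -/
def argminE [Fintype A] [Nonempty A] (q : A → ℝ) (a : A) : ℝ :=
  if q a = minRow q then (1 : ℝ) / (Finset.univ.filter fun a' => q a' = minRow q).card else 0

/-- (P^{π,μ} ν)(x) = ∑_{x'} ν(x') ∑_a π(a|x') p(x|x',a,μ). -/
def Ppush [Fintype X] [Fintype A] (p : X → A → (X → ℝ) → X → ℝ)
    (π : X → A → ℝ) (μ ν : X → ℝ) (x : X) : ℝ :=
  ∑ x', ν x' * ∑ a, π x' a * p x' a μ x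

/-- P₂(Q,μ) = P^{softmin_φ Q, μ} μ − μ. -/
def P2 [Fintype X] [Fintype A] (φ : ℝ) (p : X → A → (X → ℝ) → X → ℝ)
    (Q : X → A → ℝ) (μ : X → ℝ) (x : X) : ℝ :=
  Ppush p (fun x' => softmin φ (Q x')) μ μ x - μ x

/-- The Bellman operator (B_μ Q)(x,a) = f(x,a,μ) + γ ∑_{x'} p(x'|x,a,μ) min_{a'} Q(x',a'). -/
def bell [Fintype X] [Fintype A] [Nonempty A]
    (f : X → A → (X → ℝ) → ℝ) (p : X → A → (X → ℝ) → X → ℝ) (γ : ℝ)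
    (μ : X → ℝ) (Q : X → A → ℝ) (x : X) (a : A) : ℝ :=
  f x a μ + γ * ∑ x', p x a μ x' * minRow (Q x')

/-- T₂(Q,μ) = B_μ Q − Q. -/
def T2 [Fintype X] [Fintype A] [Nonempty A]
    (f : X → A → (X → ℝ) → ℝ) (p : X → A → (X → ℝ) → X → ℝ) (γ : ℝ)
    (Q : X → A → ℝ) (μ : X → ℝ) (x : X) (a : A) : ℝ :=
  bell f p γ μ Q x a - Q x a

/-!
Writing `π, π'` for the soft-min policies of `Q, Q'`, the difference `P₂(Q,μ) - P₂(Q',μ)` is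
`P^{π - π',μ} μ`; as every `p(·|x',a,μ)` is a probability vector, its `ℓ¹` norm is at most
`∑_{x'} μ(x') ∑_a |π(a|x') - π'(a|x')|`. Each coordinate of the soft-min is `φ/2`-Lipschitz for
the sup norm: along the segment `z' + t (z - z')` its derivative is `φ σ_a (⟨σ, d⟩ - d_a)` with
`σ` the soft-min and `d = z - z'`, which is at most `φ ‖d‖∞ · 2 σ_a (1 - σ_a) ≤ φ ‖d‖∞ / 2`.
-/

lemma IsProb.abs_mul_sum_mul_sub_le [Fintype A] {σ : A → ℝ} (hσ : IsProb σ) {d : A → ℝ} {ε : ℝ}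
    (hd : ∀ b, |d b| ≤ ε) (a : A) :
    |σ a * (∑ b, σ b * d b - d a)| ≤ ε / 2 := by
  have hε : 0 ≤ ε := (abs_nonneg _).trans (hd a)
  have hmean : ∑ b, σ b * d b - d a = ∑ b ∈ univ.erase a, σ b * (d b - d a) := by
    rw [sum_erase _ (by simp)]
    simp only [mul_sub, sum_sub_distrib, ← sum_mul, hσ.2, one_mul]
  have hrest : ∑ b ∈ univ.erase a, σ b = 1 - σ a := by
    rw [← hσ.2, ← add_sum_erase _ _ (mem_univ a)]; ring
  have hdev : |∑ b ∈ univ.erase a, σ b * (d b - d a)| ≤ 2 * ε * (1 - σ a) :=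
    calc |∑ b ∈ univ.erase a, σ b * (d b - d a)|
        ≤ ∑ b ∈ univ.erase a, σ b * (2 * ε) := by
          refine (abs_sum_le_sum_abs _ _).trans (sum_le_sum fun b _ => ?_)
          rw [abs_mul, abs_of_nonneg (hσ.1 b)]
          gcongr
          · exact hσ.1 b
          · linarith [abs_sub (d b) (d a), hd a, hd b]
      _ = 2 * ε * (1 - σ a) := by rw [← sum_mul, hrest]; ring
  rw [hmean, abs_mul, abs_of_nonneg (hσ.1 a)]
  -- `σ (1 - σ) ≤ 1/4`
  nlinarith [mul_le_mul_of_nonneg_left hdev (hσ.1 a), sq_nonneg (2 * σ a - 1)]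

lemma isProb_softmin [Fintype A] [Nonempty A] (φ : ℝ) (z : A → ℝ) : IsProb (softmin φ z) := by
  have hS : 0 < ∑ b, Real.exp (-φ * z b) := sum_pos (fun b _ => Real.exp_pos _) univ_nonempty
  refine ⟨fun a => div_nonneg (Real.exp_pos _).le hS.le, ?_⟩
  simp only [softmin, ← sum_div, div_self hS.ne']

lemma hasDerivAt_softmin_add_smul [Fintype A] [Nonempty A] (φ : ℝ) (z d : A → ℝ) (a : A)
    (t : ℝ) :
    HasDerivAt (fun s => softmin φ (z + s • d) a)
      (φ * softmin φ (z + t • d) a * (∑ b, softmin φ (z + t • d) b * d b - d a)) t := by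
  have hexp : ∀ b, HasDerivAt (fun s => Real.exp (-φ * (z + s • d) b))
      (Real.exp (-φ * (z + t • d) b) * (-φ * d b)) t := fun b => by
    simpa using ((((hasDerivAt_id t).mul_const (d b)).const_add (z b)).const_mul (-φ)).exp
  have hS : 0 < ∑ b, Real.exp (-φ * (z + t • d) b) :=
    sum_pos (fun b _ => Real.exp_pos _) univ_nonempty
  refine ((hexp a).fun_div (HasDerivAt.fun_sum fun b _ => hexp b) hS.ne').congr_deriv ?_
  simp only [softmin, ← sum_div, div_mul_eq_mul_div]
  field_simp
  simp only [mul_sub, mul_sum, ← sum_neg_distrib, ← sum_sub_distrib]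
  exact sum_congr rfl fun b _ => by ring

theorem abs_softmin_sub_softmin_le [Fintype A] [Nonempty A] (φ : ℝ) {z z' : A → ℝ} {ε : ℝ}
    (h : ∀ b, |z b - z' b| ≤ ε) (a : A) :
    |softmin φ z a - softmin φ z' a| ≤ |φ| * ε / 2 := by
  have hbound : ∀ t : ℝ, ‖φ * softmin φ (z' + t • (z - z')) a *
      (∑ b, softmin φ (z' + t • (z - z')) b * (z - z') b - (z - z') a)‖ ≤ |φ| * ε / 2 := by
    intro t
    rw [Real.norm_eq_abs, mul_assoc, abs_mul, mul_div_assoc]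
    exact mul_le_mul_of_nonneg_left
      ((isProb_softmin φ _).abs_mul_sum_mul_sub_le h a) (abs_nonneg φ)
  have hmvt := convex_univ.norm_image_sub_le_of_norm_hasDerivWithin_le
    (fun t _ => (hasDerivAt_softmin_add_smul φ z' (z - z') a t).hasDerivWithinAt)
    (fun t _ => hbound t) (Set.mem_univ 0) (Set.mem_univ 1)
  simpa using hmvt

lemma Ppush_sub_Ppush [Fintype X] [Fintype A] (p : X → A → (X → ℝ) → X → ℝ)
    (π π' : X → A → ℝ) (μ ν : X → ℝ) (x : X) :
    Ppush p π μ ν x - Ppush p π' μ ν x = Ppush p (π - π') μ ν x := by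
  simp only [Ppush, ← sum_sub_distrib, ← mul_sub, Pi.sub_apply, sub_mul]

lemma l1_Ppush_le [Fintype X] [Fintype A] {p : X → A → (X → ℝ) → X → ℝ} {μ : X → ℝ}
    (hp0 : ∀ x a x', 0 ≤ p x a μ x') (hp1 : ∀ x a, ∑ x', p x a μ x' = 1)
    (π : X → A → ℝ) {ν : X → ℝ} (hν : ∀ x, 0 ≤ ν x) :
    l1 (Ppush p π μ ν) ≤ ∑ x', ν x' * ∑ a, |π x' a| :=
  calc l1 (Ppush p π μ ν)
      ≤ ∑ x, ∑ x', ν x' * ∑ a, |π x' a| * p x' a μ x := by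
        refine sum_le_sum fun x _ => (abs_sum_le_sum_abs _ _).trans (sum_le_sum fun x' _ => ?_)
        rw [abs_mul, abs_of_nonneg (hν x')]
        refine mul_le_mul_of_nonneg_left ((abs_sum_le_sum_abs _ _).trans_eq ?_) (hν x')
        simp only [abs_mul, abs_of_nonneg (hp0 _ _ _)]
    _ = ∑ x', ν x' * ∑ a, |π x' a| := by
        rw [sum_comm]
        simp only [← mul_sum, sum_comm (γ := X), hp1, mul_one]

lemma abs_le_supQ [Fintype X] [Fintype A] [Nonempty X] [Nonempty A] (Q : X → A → ℝ) (x : X)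
    (a : A) : |Q x a| ≤ supQ Q :=
  le_sup' (fun xa : X × A => |Q xa.1 xa.2|) (mem_univ (x, a))

/-- the map Q ↦ P₂(Q,μ) is Lipschitz:
‖P₂(Q,μ) − P₂(Q',μ)‖₁ ≤ φ|𝒜|‖Q − Q'‖∞. -/
theorem P2_lipschitz_in_Q [Fintype X] [Fintype A] [Nonempty X] [Nonempty A]
    (φ : ℝ) (hφ : 0 < φ)
    (p : X → A → (X → ℝ) → X → ℝ)
    (hp0 : ∀ x a μ x', IsProb μ → 0 ≤ p x a μ x')
    (hp1 : ∀ x a μ, IsProb μ → ∑ x', p x a μ x' = 1)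
    (Q Q' : X → A → ℝ) (μ : X → ℝ) (hμ : IsProb μ) :
    l1 (fun x => P2 φ p Q μ x - P2 φ p Q' μ x)
      ≤ φ * (Fintype.card A : ℝ) * supQ (fun x a => Q x a - Q' x a) := by
  set ε := supQ (fun x a => Q x a - Q' x a)
  set δπ : X → A → ℝ := fun x => softmin φ (Q x) - softmin φ (Q' x)
  have hQ : ∀ x a, |Q x a - Q' x a| ≤ ε := abs_le_supQ (fun x a => Q x a - Q' x a)
  have hε : 0 ≤ ε := (abs_nonneg _).trans (hQ (Classical.arbitrary X) (Classical.arbitrary A))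
  have hδπ : ∀ x a, |δπ x a| ≤ φ * ε := fun x a =>
    calc |δπ x a| ≤ |φ| * ε / 2 := abs_softmin_sub_softmin_le φ (hQ x) a
      _ ≤ φ * ε := by rw [abs_of_pos hφ]; nlinarith
  have hP2 : (fun x => P2 φ p Q μ x - P2 φ p Q' μ x) = Ppush p δπ μ μ := by
    funext x
    rw [P2, P2, sub_sub_sub_cancel_right, Ppush_sub_Ppush]
    rfl
  calc l1 (fun x => P2 φ p Q μ x - P2 φ p Q' μ x)
      ≤ ∑ x', μ x' * ∑ a, |δπ x' a| := by
        rw [hP2]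
        exact l1_Ppush_le (fun x a x' => hp0 x a μ x' hμ) (fun x a => hp1 x a μ hμ) δπ hμ.1
    _ ≤ ∑ x', μ x' * ∑ _a : A, φ * ε := by
        gcongr with x' _ a
        · exact hμ.1 x'
        · exact hδπ x' a
    _ = φ * (Fintype.card A : ℝ) * ε := by
        rw [← sum_mul, hμ.2, one_mul, sum_const, card_univ, nsmul_eq_mul]; ring
end
end

section
/- Under Assumption (Lip), for every Q : 𝒳×𝒜 → ℝ and every μ, μ' ∈ Δ(𝒳), ‖T₂(Q,μ) − T₂(Q,μ')‖∞ ≤ (L_f + γ L_p‖Q‖∞)·‖μ − μ'‖₁. -/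
open Finset Filter
open scoped Classical

noncomputable section

variable {X A : Type*}

lemma supQ_nonneg [Fintype X] [Fintype A] [Nonempty X] [Nonempty A]
    (Q : X → A → ℝ) : 0 ≤ supQ Q :=
  (abs_nonneg _).trans (abs_le_supQ Q (Classical.arbitrary X) (Classical.arbitrary A))

lemma supQ_le [Fintype X] [Fintype A] [Nonempty X] [Nonempty A]
    {Q : X → A → ℝ} {c : ℝ} (h : ∀ x a, |Q x a| ≤ c) : supQ Q ≤ c :=
  Finset.sup'_le _ _ fun xa _ => h xa.1 xa.2

lemma abs_minRow_le [Fintype A] [Nonempty A] {q : A → ℝ} {c : ℝ}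
    (h : ∀ a, |q a| ≤ c) : |minRow q| ≤ c := by
  obtain ⟨a, -, ha⟩ := Finset.exists_mem_eq_inf' Finset.univ_nonempty q
  rw [minRow, ha]
  exact h a

lemma abs_sum_mul_sub_sum_mul_le [Fintype X] {w w' g : X → ℝ} {c : ℝ}
    (hg : ∀ x, |g x| ≤ c) :
    |∑ x, w x * g x - ∑ x, w' x * g x| ≤ l1 (fun x => w x - w' x) * c := by
  rw [← Finset.sum_sub_distrib, l1, Finset.sum_mul]
  calc |∑ x, (w x * g x - w' x * g x)|
      ≤ ∑ x, |w x - w' x| * |g x| := by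
        simpa only [← sub_mul, abs_mul] using
          Finset.abs_sum_le_sum_abs (fun x => w x * g x - w' x * g x) Finset.univ
    _ ≤ ∑ x, |w x - w' x| * c :=
        Finset.sum_le_sum fun x _ => mul_le_mul_of_nonneg_left (hg x) (abs_nonneg _)

lemma T2_sub_T2 [Fintype X] [Fintype A] [Nonempty A]
    (f : X → A → (X → ℝ) → ℝ) (p : X → A → (X → ℝ) → X → ℝ) (γ : ℝ)
    (Q : X → A → ℝ) (μ μ' : X → ℝ) (x : X) (a : A) :
    T2 f p γ Q μ x a - T2 f p γ Q μ' x a =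
      (f x a μ - f x a μ') +
        γ * (∑ x', p x a μ x' * minRow (Q x') - ∑ x', p x a μ' x' * minRow (Q x')) := by
  simp only [T2, bell]
  ring

theorem T2_lipschitz_in_mu_general [Fintype X] [Fintype A] [Nonempty X] [Nonempty A]
    (γ : ℝ) (hγ0 : 0 < γ)
    (f : X → A → (X → ℝ) → ℝ)
    (p : X → A → (X → ℝ) → X → ℝ)
    (Lf Lp : ℝ)
    (hLf : ∀ x a μ μ', IsProb μ → IsProb μ' →
      |f x a μ - f x a μ'| ≤ Lf * l1 (fun y => μ y - μ' y))
    (hLp : ∀ x a μ μ', IsProb μ → IsProb μ' →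
      ∑ x', |p x a μ x' - p x a μ' x'| ≤ Lp * l1 (fun y => μ y - μ' y))
    (Q : X → A → ℝ) (μ μ' : X → ℝ) (hμ : IsProb μ) (hμ' : IsProb μ') :
    supQ (fun x a => T2 f p γ Q μ x a - T2 f p γ Q μ' x a)
      ≤ (Lf + γ * Lp * supQ Q) * l1 (fun x => μ x - μ' x) := by
  refine supQ_le fun x a => ?_
  have hmin : ∀ x', |minRow (Q x')| ≤ supQ Q :=
    fun x' => abs_minRow_le (abs_le_supQ Q x')
  have hcont : |∑ x', p x a μ x' * minRow (Q x') - ∑ x', p x a μ' x' * minRow (Q x')|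
      ≤ Lp * l1 (fun y => μ y - μ' y) * supQ Q :=
    (abs_sum_mul_sub_sum_mul_le hmin).trans
      (mul_le_mul_of_nonneg_right (hLp x a μ μ' hμ hμ') (supQ_nonneg Q))
  rw [T2_sub_T2]
  calc _ ≤ |f x a μ - f x a μ'| +
        γ * |∑ x', p x a μ x' * minRow (Q x') - ∑ x', p x a μ' x' * minRow (Q x')| :=
        (abs_add_le _ _).trans_eq (by rw [abs_mul, abs_of_pos hγ0])
    _ ≤ Lf * l1 (fun y => μ y - μ' y) + γ * (Lp * l1 (fun y => μ y - μ' y) * supQ Q) := by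
        gcongr
        exact hLf x a μ μ' hμ hμ'
    _ = (Lf + γ * Lp * supQ Q) * l1 (fun x => μ x - μ' x) := by ring

/-- the map μ ↦ T₂(Q,μ) is Lipschitz:
‖T₂(Q,μ) − T₂(Q,μ')‖∞ ≤ (L_f + γ L_p‖Q‖∞)‖μ − μ'‖₁. -/
theorem T2_lipschitz_in_mu [Fintype X] [Fintype A] [Nonempty X] [Nonempty A]
    (γ : ℝ) (hγ0 : 0 < γ) (hγ1 : γ < 1)
    (f : X → A → (X → ℝ) → ℝ)
    (p : X → A → (X → ℝ) → X → ℝ)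
    (hp0 : ∀ x a μ x', IsProb μ → 0 ≤ p x a μ x')
    (hp1 : ∀ x a μ, IsProb μ → ∑ x', p x a μ x' = 1)
    (Lf Lp : ℝ) (hLf0 : 0 ≤ Lf) (hLp0 : 0 ≤ Lp)
    (hLf : ∀ x a μ μ', IsProb μ → IsProb μ' →
      |f x a μ - f x a μ'| ≤ Lf * l1 (fun y => μ y - μ' y))
    (hLp : ∀ x a μ μ', IsProb μ → IsProb μ' →
      ∑ x', |p x a μ x' - p x a μ' x'| ≤ Lp * l1 (fun y => μ y - μ' y))
    (Q : X → A → ℝ) (μ μ' : X → ℝ) (hμ : IsProb μ) (hμ' : IsProb μ') :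
    supQ (fun x a => T2 f p γ Q μ x a - T2 f p γ Q μ' x a)
      ≤ (Lf + γ * Lp * supQ Q) * l1 (fun x => μ x - μ' x) :=
  T2_lipschitz_in_mu_general γ hγ0 f p Lf Lp hLf hLp Q μ μ' hμ hμ'
end
end
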